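/- Let A be an Arens regular Banach algebra, X a Banach A-bimodule, and D : A → X* a bounded surjective derivation. Then D'' : A** → X*** is a derivation if and only if for every x'' ∈ X**, the map a'' ↦ x''a'' from A** to X** is weak-star to weak continuous. -/

import Mathlib

set_option maxHeartbeats 1000000

open Filter Topology ContinuousLinearMap NormedSpace

noncomputable section DualSetup

/-- `NormedSpace.Dual` as in the older Mathlib (removed since; `StrongDual` replaces it). -/
abbrev NormedSpace.Dual (𝕜 : Type*) [NontriviallyNormedField 𝕜] (E : Type*)
    [SeminormedAddCommGroup E] [NormedSpace 𝕜 E] : Type _ := E →L[𝕜] 𝕜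

instance (𝕜 : Type*) [NontriviallyNormedField 𝕜] (E : Type*)
    [SeminormedAddCommGroup E] [NormedSpace 𝕜 E] : NormedSpace 𝕜 (NormedSpace.Dual 𝕜 E) :=
  inferInstance

instance (𝕜 : Type*) [NontriviallyNormedField 𝕜] (E : Type*)
    [SeminormedAddCommGroup E] [NormedSpace 𝕜 E] :
    SeminormedAddCommGroup (NormedSpace.Dual 𝕜 E) :=
  inferInstance

end DualSetup

noncomputable section ArensSetup

/-- The adjoint (transpose) of a continuous linear map between normed spaces. -/
def adjCLM {E F : Type*} [SeminormedAddCommGroup E] [NormedSpace ℝ E]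
    [SeminormedAddCommGroup F] [NormedSpace ℝ F] (T : E →L[ℝ] F) :
    Dual ℝ F →L[ℝ] Dual ℝ E :=
  (ContinuousLinearMap.compL ℝ E F ℝ).flip T

@[simp] theorem adjCLM_apply {E F : Type*} [SeminormedAddCommGroup E] [NormedSpace ℝ E]
    [SeminormedAddCommGroup F] [NormedSpace ℝ F] (T : E →L[ℝ] F) (g : Dual ℝ F) (x : E) :
    adjCLM T g x = g (T x) := rfl

/-- One-step Arens-type adjoint of a bounded bilinear map:
`ext1 β g' e = g' ∘ (β e)`. -/
def ext1 {E F G : Type*} [SeminormedAddCommGroup E] [NormedSpace ℝ E]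
    [SeminormedAddCommGroup F] [NormedSpace ℝ F] [SeminormedAddCommGroup G] [NormedSpace ℝ G]
    (β : E →L[ℝ] F →L[ℝ] G) : Dual ℝ G →L[ℝ] E →L[ℝ] Dual ℝ F :=
  ((ContinuousLinearMap.compL ℝ F G ℝ).flip.comp β).flip

@[simp] theorem ext1_apply {E F G : Type*} [SeminormedAddCommGroup E] [NormedSpace ℝ E]
    [SeminormedAddCommGroup F] [NormedSpace ℝ F] [SeminormedAddCommGroup G] [NormedSpace ℝ G]
    (β : E →L[ℝ] F →L[ℝ] G) (g' : Dual ℝ G) (e : E) (f : F) :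
    ext1 β g' e f = g' (β e f) := rfl

/-- Triple adjoint: the (first) Arens extension of a bounded bilinear map to the
second duals. -/
def ext3 {E F G : Type*} [SeminormedAddCommGroup E] [NormedSpace ℝ E]
    [SeminormedAddCommGroup F] [NormedSpace ℝ F] [SeminormedAddCommGroup G] [NormedSpace ℝ G]
    (β : E →L[ℝ] F →L[ℝ] G) :
    Dual ℝ (Dual ℝ E) →L[ℝ] Dual ℝ (Dual ℝ F) →L[ℝ] Dual ℝ (Dual ℝ G) :=
  ext1 (ext1 (ext1 β))

variable (A : Type*) [NonUnitalNormedRing A] [NormedSpace ℝ A]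
  [SMulCommClass ℝ A A] [IsScalarTower ℝ A A] [CompleteSpace A]

/-- The first (left) Arens product on `A**`: `⟨a''b'', a'⟩ = ⟨a'', b''a'⟩`. -/
def fArens : Dual ℝ (Dual ℝ A) →L[ℝ] Dual ℝ (Dual ℝ A) →L[ℝ] Dual ℝ (Dual ℝ A) :=
  ext3 (ContinuousLinearMap.mul ℝ A)

/-- The second (right) Arens product on `A**`: `⟨a''∘b'', a'⟩ = ⟨b'', a'∘a''⟩`. -/
def sArens : Dual ℝ (Dual ℝ A) →L[ℝ] Dual ℝ (Dual ℝ A) →L[ℝ] Dual ℝ (Dual ℝ A) :=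
  (ext3 (ContinuousLinearMap.mul ℝ A).flip).flip

/-- `A` is Arens regular when the two Arens products on `A**` coincide. -/
def ArensRegular : Prop := fArens A = sArens A

variable {A}

/-- Weak-star to weak continuity for a map from the dual of `E` into `F`. -/
def WStarToWCont {E F : Type*} [SeminormedAddCommGroup E] [NormedSpace ℝ E]
    [SeminormedAddCommGroup F] [NormedSpace ℝ F] (f : Dual ℝ E → F) : Prop :=
  Continuous fun x : WeakDual ℝ E => toWeakSpace ℝ F (f (WeakDual.toStrongDual x))

variable (A)

/-- The second adjoint `T'' : A** → A**` of `T : A → A`. -/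
def secondAdj (T : A →L[ℝ] A) : Dual ℝ (Dual ℝ A) →L[ℝ] Dual ℝ (Dual ℝ A) :=
  adjCLM (adjCLM T)

/-- Left action of `A` on `A*`: `⟨a·a', b⟩ = ⟨a', ba⟩`. -/
def dualLeft : A →L[ℝ] Dual ℝ A →L[ℝ] Dual ℝ A :=
  (ext1 (ContinuousLinearMap.mul ℝ A).flip).flip

/-- Right action of `A` on `A*`: `⟨a'·a, b⟩ = ⟨a', ab⟩`. -/
def dualRight : Dual ℝ A →L[ℝ] A →L[ℝ] Dual ℝ A :=
  ext1 (ContinuousLinearMap.mul ℝ A)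

/-- Left action of `A**` (first Arens product) on `A***`. -/
def dualLeft2 : Dual ℝ (Dual ℝ A) →L[ℝ] Dual ℝ (Dual ℝ (Dual ℝ A)) →L[ℝ]
    Dual ℝ (Dual ℝ (Dual ℝ A)) :=
  (ext1 (fArens A).flip).flip

/-- Right action of `A**` (first Arens product) on `A***`. -/
def dualRight2 : Dual ℝ (Dual ℝ (Dual ℝ A)) →L[ℝ] Dual ℝ (Dual ℝ A) →L[ℝ]
    Dual ℝ (Dual ℝ (Dual ℝ A)) :=
  ext1 (fArens A)

end ArensSetup

section BimoduleSetup

set_option maxHeartbeats 1000000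

open Filter Topology ContinuousLinearMap NormedSpace

/-- A Banach `A`-bimodule: bounded bilinear left and right actions satisfying the
usual compatibility axioms. -/
structure BanachBimodule (A X : Type*) [NonUnitalNormedRing A] [NormedSpace ℝ A]
    [SMulCommClass ℝ A A] [IsScalarTower ℝ A A]
    [NormedAddCommGroup X] [NormedSpace ℝ X] [CompleteSpace X] where
  l : A →L[ℝ] X →L[ℝ] X
  r : X →L[ℝ] A →L[ℝ] X
  l_mul : ∀ a b x, l (a * b) x = l a (l b x)
  r_mul : ∀ x a b, r (r x a) b = r x (a * b)
  l_r : ∀ a x b, l a (r x b) = r (l a x) b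

variable {A X : Type*} [NonUnitalNormedRing A] [NormedSpace ℝ A]
  [SMulCommClass ℝ A A] [IsScalarTower ℝ A A] [CompleteSpace A]
  [NormedAddCommGroup X] [NormedSpace ℝ X] [CompleteSpace X]

/-- Left action of `A` on `X*`: `⟨a·f, x⟩ = ⟨f, x·a⟩`. -/
noncomputable def modDualLeft (M : BanachBimodule A X) : A →L[ℝ] Dual ℝ X →L[ℝ] Dual ℝ X :=
  (ext1 M.r.flip).flip

/-- Right action of `A` on `X*`: `⟨f·a, x⟩ = ⟨f, a·x⟩`. -/
noncomputable def modDualRight (M : BanachBimodule A X) : Dual ℝ X →L[ℝ] A →L[ℝ] Dual ℝ X :=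
  ext1 M.l

/-- Left action of `A**` on `X**` (first Arens extension). -/
noncomputable def modL2 (M : BanachBimodule A X) :
    Dual ℝ (Dual ℝ A) →L[ℝ] Dual ℝ (Dual ℝ X) →L[ℝ] Dual ℝ (Dual ℝ X) :=
  ext3 M.l

/-- Right action of `A**` on `X**` (first Arens extension); `modR2 M x'' a'' = x''a''`. -/
noncomputable def modR2 (M : BanachBimodule A X) :
    Dual ℝ (Dual ℝ X) →L[ℝ] Dual ℝ (Dual ℝ A) →L[ℝ] Dual ℝ (Dual ℝ X) :=
  ext3 M.r

/-- Left action of `A**` on `X***`: `⟨a''·x''', x''⟩ = ⟨x''', x''a''⟩`. -/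
noncomputable def modL3 (M : BanachBimodule A X) :
    Dual ℝ (Dual ℝ A) →L[ℝ] Dual ℝ (Dual ℝ (Dual ℝ X)) →L[ℝ] Dual ℝ (Dual ℝ (Dual ℝ X)) :=
  (ext1 (modR2 M).flip).flip

/-- Right action of `A**` on `X***`: `⟨x'''·a'', x''⟩ = ⟨x''', a''x''⟩`. -/
noncomputable def modR3 (M : BanachBimodule A X) :
    Dual ℝ (Dual ℝ (Dual ℝ X)) →L[ℝ] Dual ℝ (Dual ℝ A) →L[ℝ] Dual ℝ (Dual ℝ (Dual ℝ X)) :=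
  ext1 (modL2 M)

end BimoduleSetup

section DerivationSetup

variable {B Y : Type*} [SeminormedAddCommGroup B] [NormedSpace ℝ B]
  [SeminormedAddCommGroup Y] [NormedSpace ℝ Y]

/-- `D` is a derivation with respect to the multiplication `m` and the module
actions `l`, `r`. -/
def IsDeriv (m : B →L[ℝ] B →L[ℝ] B) (l : B →L[ℝ] Y →L[ℝ] Y)
    (r : Y →L[ℝ] B →L[ℝ] Y) (D : B →L[ℝ] Y) : Prop :=
  ∀ a b, D (m a b) = l a (D b) + r (D a) b

/-- `D` is an inner derivation: `D a = a·y − y·a` for some fixed `y`. -/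
def IsInner (l : B →L[ℝ] Y →L[ℝ] Y) (r : Y →L[ℝ] B →L[ℝ] Y) (D : B →L[ℝ] Y) : Prop :=
  ∃ y, ∀ a, D a = l a y - r y a

/-- `D` is a `T-S`-derivation: `D(ab) = T(a)·D(b) + D(a)·S(b)`. -/
def IsTSDeriv (m : B →L[ℝ] B →L[ℝ] B) (l : B →L[ℝ] Y →L[ℝ] Y)
    (r : Y →L[ℝ] B →L[ℝ] Y) (T S : B →L[ℝ] B) (D : B →L[ℝ] Y) : Prop :=
  ∀ a b, D (m a b) = l (T a) (D b) + r (D a) (S b)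

/-- `D` is an inner `T-S`-derivation: `D a = T(a)·y − y·S(a)` for some fixed `y`. -/
def IsTSInner (l : B →L[ℝ] Y →L[ℝ] Y) (r : Y →L[ℝ] B →L[ℝ] Y)
    (T S : B →L[ℝ] B) (D : B →L[ℝ] Y) : Prop :=
  ∃ y, ∀ a, D a = l (T a) y - r y (S a)

end DerivationSetup

/-!
Evaluating the derivation identity for `D''` at `x'' ∈ X**` and using that `D` is a derivation
gives `⟨Φ □ Ψ, D' x''⟩ = ⟨Φ, ψ⟩ + ⟨Φ, D' (Ψ · x'')⟩`, where `ψ ∈ A*` is `a ↦ ⟨D'' Ψ, x'' · a⟩`.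
So `D''` is a derivation iff every functional `Φ ↦ ⟨D'' Ψ, x'' · Φ⟩` on `A**` is evaluation at
an element of `A*`, i.e. is weak-star continuous. Since `D` is onto, `D'` is bounded below by the
open mapping theorem, hence `D''` maps onto `X***` by Hahn–Banach; so the condition covers every
`x''' ∘ (x'' · ·)`, which is exactly weak-star to weak continuity of `a'' ↦ x'' · a''`.
-/

section WeakStarDuality

variable {𝕜 : Type*} [NontriviallyNormedField 𝕜]

theorem mem_range_inclusionInDoubleDual_iff {E : Type*} [SeminormedAddCommGroup E]
    [NormedSpace 𝕜 E] (φ : Dual 𝕜 (Dual 𝕜 (Dual 𝕜 E))) :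
    φ ∈ Set.range (inclusionInDoubleDual 𝕜 (Dual 𝕜 E)) ↔
      φ = inclusionInDoubleDual 𝕜 (Dual 𝕜 E) (φ.comp (inclusionInDoubleDual 𝕜 E)) := by
  refine ⟨?_, fun h => ⟨_, h.symm⟩⟩
  rintro ⟨ψ, rfl⟩
  rfl

theorem continuous_weakDual_iff_mem_range_inclusionInDoubleDual {F : Type*}
    [SeminormedAddCommGroup F] [NormedSpace 𝕜 F] (φ : Dual 𝕜 (Dual 𝕜 F)) :
    Continuous (fun x : WeakDual 𝕜 F => φ (WeakDual.toStrongDual x)) ↔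
      φ ∈ Set.range (inclusionInDoubleDual 𝕜 F) := by
  refine ⟨fun hφ => ?_, ?_⟩
  · obtain ⟨y, hy⟩ := LinearMap.dualEmbedding_surjective (topDualPairing 𝕜 F)
      { toLinearMap := (φ : Dual 𝕜 F →ₗ[𝕜] 𝕜), cont := hφ }
    exact ⟨y, ext fun x => DFunLike.congr_fun hy x⟩
  · rintro ⟨y, rfl⟩
    exact WeakDual.eval_continuous y

end WeakStarDuality

theorem wStarToWCont_iff {E F : Type*} [SeminormedAddCommGroup E] [NormedSpace ℝ E]
    [SeminormedAddCommGroup F] [NormedSpace ℝ F] (f : Dual ℝ E → F) :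
    WStarToWCont f ↔
      ∀ φ : Dual ℝ F, Continuous fun x : WeakDual ℝ E => φ (f (WeakDual.toStrongDual x)) :=
  ⟨fun h φ => (WeakBilin.eval_continuous _ φ).comp h,
    fun h => WeakBilin.continuous_of_continuous_eval _ h⟩

theorem surjective_adjCLM_of_norm_le {U V : Type*} [NormedAddCommGroup U] [NormedSpace ℝ U]
    [SeminormedAddCommGroup V] [NormedSpace ℝ V] (S : U →L[ℝ] V) {C : ℝ}
    (hS : ∀ u, ‖u‖ ≤ C * ‖S u‖) : Function.Surjective (adjCLM S) := by
  intro φ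
  have hinj : Function.Injective S := (injective_iff_map_eq_zero S).2 fun u hu =>
    norm_le_zero_iff.1 <| by simpa [hu] using hS u
  let e₀ := LinearEquiv.ofInjective (S : U →ₗ[ℝ] V) hinj
  let e : U ≃L[ℝ] LinearMap.range (S : U →ₗ[ℝ] V) :=
    e₀.toContinuousLinearEquivOfBounds ‖S‖ C (fun u => S.le_opNorm u) fun v => by
      obtain ⟨u, rfl⟩ := e₀.surjective v
      simpa [e₀] using hS u
  obtain ⟨g, hg, -⟩ := exists_extension_norm_eq _ (φ.comp e.symm.toContinuousLinearMap)
  exact ⟨g, ext fun u => (hg (e u)).trans (by simp)⟩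

theorem exists_norm_le_mul_norm_adjCLM {E F : Type*} [NormedAddCommGroup E] [NormedSpace ℝ E]
    [CompleteSpace E] [NormedAddCommGroup F] [NormedSpace ℝ F] [CompleteSpace F]
    {T : E →L[ℝ] F} (hT : Function.Surjective T) :
    ∃ C, ∀ g : Dual ℝ F, ‖g‖ ≤ C * ‖adjCLM T g‖ := by
  obtain ⟨C, hC0, hC⟩ := T.exists_preimage_norm_le hT
  refine ⟨C, fun g => opNorm_le_bound _ (by positivity) fun y => ?_⟩
  obtain ⟨x, rfl, hx⟩ := hC y
  calc ‖g (T x)‖ = ‖adjCLM T g x‖ := rfl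
    _ ≤ ‖adjCLM T g‖ * (C * ‖T x‖) := (le_opNorm _ _).trans (by gcongr)
    _ = C * ‖adjCLM T g‖ * ‖T x‖ := by ring

theorem surjective_adjCLM_adjCLM {E F : Type*} [NormedAddCommGroup E] [NormedSpace ℝ E]
    [CompleteSpace E] [NormedAddCommGroup F] [NormedSpace ℝ F] [CompleteSpace F]
    {T : E →L[ℝ] F} (hT : Function.Surjective T) : Function.Surjective (adjCLM (adjCLM T)) :=
  have ⟨_, hC⟩ := exists_norm_le_mul_norm_adjCLM hT
  surjective_adjCLM_of_norm_le _ hC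

section SecondAdjointDerivation

variable {A : Type*} [NonUnitalNormedRing A] [NormedSpace ℝ A]
  [SMulCommClass ℝ A A] [IsScalarTower ℝ A A]
  {X : Type*} [NormedAddCommGroup X] [NormedSpace ℝ X] [CompleteSpace X]
  (M : BanachBimodule A X) {D : A →L[ℝ] Dual ℝ X}

theorem dualRight_adjCLM_apply
    (hD : IsDeriv (ContinuousLinearMap.mul ℝ A) (modDualLeft M) (modDualRight M) D)
    (x'' : Dual ℝ (Dual ℝ X)) (a : A) :
    dualRight A (adjCLM D x'') a =
      adjCLM D (modR2 M x'' (inclusionInDoubleDual ℝ A a)) + ext1 (ext1 M.l) x'' (D a) := by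
  ext b
  change x'' (D (ContinuousLinearMap.mul ℝ A a b)) =
    x'' (modDualLeft M a (D b)) + x'' (modDualRight M (D a) b)
  rw [hD a b, map_add]

theorem fArens_apply_adjCLM
    (hD : IsDeriv (ContinuousLinearMap.mul ℝ A) (modDualLeft M) (modDualRight M) D)
    (Φ Ψ : Dual ℝ (Dual ℝ A)) (x'' : Dual ℝ (Dual ℝ X)) :
    fArens A Φ Ψ (adjCLM D x'') =
      Φ (((adjCLM (adjCLM D) Ψ).comp (modR2 M x'')).comp (inclusionInDoubleDual ℝ A)) +
        Φ (adjCLM D (modL2 M Ψ x'')) := by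
  rw [← map_add]
  change Φ (ext1 (ext1 (ContinuousLinearMap.mul ℝ A)) Ψ (adjCLM D x'')) = _
  congr 1
  ext a
  exact (congrArg Ψ (dualRight_adjCLM_apply M hD x'' a)).trans (map_add Ψ _ _)

theorem isDeriv_adjCLM_adjCLM_iff
    (hD : IsDeriv (ContinuousLinearMap.mul ℝ A) (modDualLeft M) (modDualRight M) D) :
    IsDeriv (fArens A) (modL3 M) (modR3 M) (adjCLM (adjCLM D)) ↔
      ∀ Ψ x'', (adjCLM (adjCLM D) Ψ).comp (modR2 M x'') ∈
        Set.range (inclusionInDoubleDual ℝ (Dual ℝ A)) := by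
  have hpoint : ∀ Φ Ψ x'', adjCLM (adjCLM D) (fArens A Φ Ψ) x'' =
      (modL3 M Φ (adjCLM (adjCLM D) Ψ) + modR3 M (adjCLM (adjCLM D) Φ) Ψ) x'' ↔
      (adjCLM (adjCLM D) Ψ).comp (modR2 M x'') Φ =
        Φ (((adjCLM (adjCLM D) Ψ).comp (modR2 M x'')).comp (inclusionInDoubleDual ℝ A)) := by
    intro Φ Ψ x''
    change fArens A Φ Ψ (adjCLM D x'') =
      Ψ (adjCLM D (modR2 M x'' Φ)) + Φ (adjCLM D (modL2 M Ψ x'')) ↔ _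
    rw [fArens_apply_adjCLM M hD, add_left_inj, eq_comm]
    rfl
  simp only [IsDeriv, ContinuousLinearMap.ext_iff, hpoint, mem_range_inclusionInDoubleDual_iff]
  exact ⟨fun h Ψ x'' Φ => h Φ Ψ x'', fun h Φ Ψ x'' => h Ψ x'' Φ⟩

end SecondAdjointDerivation

section Statements
set_option maxHeartbeats 1000000
open Filter Topology ContinuousLinearMap NormedSpace

variable {A : Type*} [NonUnitalNormedRing A] [NormedSpace ℝ A]
  [SMulCommClass ℝ A A] [IsScalarTower ℝ A A] [CompleteSpace A]

variable {X : Type*} [NormedAddCommGroup X] [NormedSpace ℝ X] [CompleteSpace X]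

theorem secondAdjoint_derivation_iff_wsw_general (M : BanachBimodule A X)
    (D : A →L[ℝ] Dual ℝ X)
    (hD : IsDeriv (ContinuousLinearMap.mul ℝ A) (modDualLeft M) (modDualRight M) D)
    (hsurj : Function.Surjective D) :
    IsDeriv (fArens A) (modL3 M) (modR3 M) (adjCLM (adjCLM D)) ↔
      ∀ x'' : Dual ℝ (Dual ℝ X), WStarToWCont (fun a'' => modR2 M x'' a'') := by
  rw [isDeriv_adjCLM_adjCLM_iff M hD, forall_comm]
  refine forall_congr' fun x'' => ?_
  rw [wStarToWCont_iff, (surjective_adjCLM_adjCLM hsurj).forall]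
  exact forall_congr' fun Ψ => (continuous_weakDual_iff_mem_range_inclusionInDoubleDual _).symm

/-- For Arens regular `A` and a surjective derivation `D : A → X*`, `D''` is a derivation
iff `a'' ↦ x''a''` is weak-star to weak continuous for all `x'' ∈ X**`. -/
theorem secondAdjoint_derivation_iff_wsw (hreg : ArensRegular A) (M : BanachBimodule A X)
    (D : A →L[ℝ] Dual ℝ X)
    (hD : IsDeriv (ContinuousLinearMap.mul ℝ A) (modDualLeft M) (modDualRight M) D)
    (hsurj : Function.Surjective D) :
    IsDeriv (fArens A) (modL3 M) (modR3 M) (adjCLM (adjCLM D)) ↔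
      ∀ x'' : Dual ℝ (Dual ℝ X), WStarToWCont (fun a'' => modR2 M x'' a'') :=
  secondAdjoint_derivation_iff_wsw_general M D hD hsurj

end Statements
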